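/- If v ∈ ℝ is nonzero, then the spectrum σ(H) = {E ∈ ℝ : Δ_L(E) ∈ [-2, 2]} of the discrete Schrödinger operator with sparse L-periodic potential consists of exactly L disjoint nonempty closed intervals. -/

import Mathlib

/-!
With `x = E / 2` and `L = n + 1`, the spectrum is the sublevel set `{D² - 4 ≤ 0}` of
`D = 2 T_L - v U_{L-1}`, and `D² - 4` has degree `2L` and positive leading coefficient. Once it
has `2L` distinct real roots `z₀ < ⋯ < z_{2L-1}`, it is nonpositive exactly on the disjoint
intervals `[z_{2i}, z_{2i+1}]`.

The Pell identity `T_L² - (x² - 1) U_{L-1}² = 1` factors `D² - 4 = U_{L-1} · Q` with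
`deg Q = L + 1`. The `L - 1` zeros `cos (kπ/L)` of `U_{L-1}` are roots, and `Q = -4v (-1)^k`
there. For `v > 0`, a zero of `D` to the right of `cos (π/L)` (where `Q < 0`) together with the
behaviour of `Q` at `±∞` gives `L + 2` points of alternating sign, hence `L + 1` roots of `Q`;
by the Pell identity none of them is a zero of `U_{L-1}`. The case `v < 0` follows by `x ↦ -x`.
-/

open Polynomial

noncomputable def sparseDiscriminantReal (L : ℕ) (v : ℝ) (E : ℝ) : ℝ :=
  2 * (Polynomial.Chebyshev.T ℝ L).eval (E / 2)
    - v * (Polynomial.Chebyshev.U ℝ (L - 1)).eval (E / 2)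

open Polynomial.Chebyshev Real Set Filter

namespace Polynomial

lemma eventually_pos_atTop {p : ℝ[X]} (hp : 0 < p.leadingCoeff) :
    ∀ᶠ x in atTop, 0 < p.eval x := by
  rcases lt_or_ge 0 p.degree with hdeg | hdeg
  · exact (p.tendsto_atTop_of_leadingCoeff_nonneg hdeg hp.le).eventually_gt_atTop 0
  · rw [eq_C_of_degree_le_zero hdeg] at hp ⊢
    exact Eventually.of_forall fun _ => by simpa using hp

lemma eventually_neg_one_pow_mul_pos_atBot {p : ℝ[X]} (hp : 0 < p.leadingCoeff) :
    ∀ᶠ x in atBot, 0 < (-1) ^ p.natDegree * p.eval x := by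
  have hq : 0 < (C ((-1) ^ p.natDegree) * p.comp (-X)).leadingCoeff := by
    rw [leadingCoeff_C_mul_of_isUnit (isUnit_neg_one.pow _), comp_neg_X_leadingCoeff_eq,
      ← mul_assoc, ← mul_pow, neg_one_mul, neg_neg, one_pow, one_mul]
    exact hp
  filter_upwards [tendsto_neg_atBot_atTop.eventually (eventually_pos_atTop hq)] with x hx
  simpa using hx

lemma eval_pos_of_forall_root_lt {p : ℝ[X]} (hp : 0 < p.leadingCoeff) {x : ℝ}
    (hx : ∀ y, p.IsRoot y → y < x) : 0 < p.eval x := by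
  by_contra! hle
  obtain ⟨M, hM, hxM⟩ := ((eventually_pos_atTop hp).and (eventually_ge_atTop x)).exists
  obtain ⟨y, hy, hroot⟩ := intermediate_value_Icc hxM p.continuous.continuousOn ⟨hle, hM.le⟩
  exact (hx y hroot).not_ge hy.1

lemma eval_nonneg_of_forall_root_le {p : ℝ[X]} (hp : 0 < p.leadingCoeff) {x : ℝ}
    (hx : ∀ y, p.IsRoot y → y ≤ x) : 0 ≤ p.eval x := by
  by_cases hroot : p.IsRoot x
  · exact hroot.eq_zero.ge
  · exact (eval_pos_of_forall_root_lt hp fun y hy =>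
      (hx y hy).lt_of_ne (by rintro rfl; exact hroot hy)).le

lemma eval_eq_leadingCoeff_mul_prod {R : Type*} [CommRing R] [IsDomain R] {p : R[X]}
    {F : Finset R} (hF : F.card = p.natDegree) (hroots : ∀ a ∈ F, p.IsRoot a) (x : R) :
    p.eval x = p.leadingCoeff * ∏ a ∈ F, (x - a) := by
  rcases eq_or_ne p 0 with rfl | hp
  · simp
  have hFroots : F.val = p.roots := by
    refine Multiset.eq_of_le_of_card_le ((Multiset.le_iff_subset F.nodup).2 fun a ha => ?_) ?_
    · exact (mem_roots hp).2 (hroots a ha)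
    · simpa [hF] using card_roots' p
  conv_lhs => rw [← C_leadingCoeff_mul_prod_multiset_X_sub_C (p := p)
    (by rw [← hFroots, ← hF]; rfl)]
  rw [← hFroots, eval_mul, eval_C, eval_multiset_prod, Multiset.map_map]
  simp

end Polynomial

lemma exists_finset_zeros_of_alternating {f : ℝ → ℝ} (hf : Continuous f) {m : ℕ}
    {a : ℕ → ℝ} (ha : ∀ k < m, a (k + 1) < a k)
    (hsign : ∀ k ≤ m, 0 < (-1) ^ k * f (a k)) :
    ∃ S : Finset ℝ, S.card = m ∧ ∀ x ∈ S, f x = 0 := by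
  have hzero : ∀ k < m, ∃ ξ ∈ Ioo (a (k + 1)) (a k), f ξ = 0 := by
    intro k hk
    have hlow : (-1) ^ k * f (a (k + 1)) < 0 := by
      have := hsign (k + 1) hk
      rw [pow_succ] at this
      linarith
    obtain ⟨ξ, hξ, hfξ⟩ := intermediate_value_Ioo (ha k hk).le
      (continuous_const.mul hf).continuousOn ⟨hlow, hsign k hk.le⟩
    exact ⟨ξ, hξ, (mul_eq_zero.1 hfξ).resolve_left (pow_ne_zero _ (by norm_num))⟩
  choose! ξ hξ hfξ using hzero
  have hanti : AntitoneOn a (Iic m) :=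
    (strictAntiOn_Iic_of_succ_lt (fun k hk => by simpa using ha k hk)).antitoneOn
  have hξanti : StrictAntiOn ξ (Iio m) := fun k hk l hl hkl =>
    calc ξ l < a l := (hξ l hl).2
      _ ≤ a (k + 1) := hanti (by simp at hk ⊢; omega) (by simp at hl ⊢; omega) hkl
      _ < ξ k := (hξ k hk).1
  refine ⟨(Finset.range m).image ξ, ?_, ?_⟩
  · rw [Finset.card_image_of_injOn (by simpa using hξanti.injOn), Finset.card_range]
  · simp only [Finset.mem_image, Finset.mem_range]
    rintro _ ⟨k, hk, rfl⟩
    exact hfξ k hk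

lemma prod_sub_mul_sub_nonpos_iff {n : ℕ} {γ β : Fin n → ℝ} (hγβ : ∀ i, γ i ≤ β i)
    (hsep : ∀ i j, i < j → β i < γ j) (x : ℝ) :
    ∏ i, (x - γ i) * (x - β i) ≤ 0 ↔ x ∈ ⋃ i, Icc (γ i) (β i) := by
  have hpos_of_notMem : ∀ j, x ∉ Icc (γ j) (β j) → 0 < (x - γ j) * (x - β j) :=
    fun j hj => lt_of_not_ge fun h => hj ((sub_mul_sub_nonpos_iff x (hγβ j)).1 h)
  rw [mem_iUnion]
  constructor
  · intro h
    by_contra! hx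
    exact (Finset.prod_pos fun j _ => hpos_of_notMem j (hx j)).not_ge h
  · rintro ⟨i, hi⟩
    have hothers : ∀ j ∈ Finset.univ.erase i, 0 < (x - γ j) * (x - β j) := by
      intro j hj
      refine hpos_of_notMem j fun hj' => ?_
      rcases lt_or_gt_of_ne (Finset.ne_of_mem_erase hj) with hji | hij
      · exact (hsep j i hji).not_ge (hi.1.trans hj'.2)
      · exact (hsep i j hij).not_ge (hj'.1.trans hi.2)
    rw [← Finset.mul_prod_erase _ _ (Finset.mem_univ i)]
    exact mul_nonpos_of_nonpos_of_nonneg ((sub_mul_sub_nonpos_iff x (hγβ i)).2 hi)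
      (Finset.prod_pos hothers).le

lemma exists_interlaced_prod_eq {n : ℕ} {F : Finset ℝ} (hF : F.card = 2 * n) :
    ∃ γ β : Fin n → ℝ, (∀ i, γ i ≤ β i) ∧ (∀ i j, i < j → β i < γ j) ∧
      ∀ x, ∏ a ∈ F, (x - a) = ∏ i, (x - γ i) * (x - β i) := by
  set z := F.orderEmbOfFin hF
  set e : Fin n × Fin 2 ≃ Fin (2 * n) := finProdFinEquiv.trans (finCongr (mul_comm n 2))
  have he : ∀ p, (e p : ℕ) = p.2 + 2 * p.1 := fun _ => rfl
  refine ⟨fun i => z (e (i, 0)), fun i => z (e (i, 1)), fun i => ?_, fun i j hij => ?_,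
    fun x => ?_⟩
  · exact z.monotone (Fin.le_def.2 (by simp [he]))
  · exact z.strictMono (Fin.lt_def.2 (by simp [he]; omega))
  · rw [← F.image_orderEmbOfFin_univ hF, Finset.prod_image (fun a _ b _ h => z.injective h),
      ← e.prod_comp, Fintype.prod_prod_type]
    simp [Fin.prod_univ_two]

theorem setOf_eval_nonpos_eq_iUnion_Icc {p : ℝ[X]} {n : ℕ} (hp : 0 < p.leadingCoeff)
    {F : Finset ℝ} (hF : F.card = 2 * n) (hdeg : p.natDegree = 2 * n)
    (hroots : ∀ a ∈ F, p.IsRoot a) :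
    ∃ γ β : Fin n → ℝ, (∀ i, γ i ≤ β i) ∧ (∀ i j, i < j → β i < γ j) ∧
      {x | p.eval x ≤ 0} = ⋃ i, Icc (γ i) (β i) := by
  obtain ⟨γ, β, hγβ, hsep, hprod⟩ := exists_interlaced_prod_eq hF
  refine ⟨γ, β, hγβ, hsep, Set.ext fun x => ?_⟩
  rw [mem_ofPred_eq, eval_eq_leadingCoeff_mul_prod (hF.trans hdeg.symm) hroots, hprod,
    ← prod_sub_mul_sub_nonpos_iff hγβ hsep]
  simp [mul_nonpos_iff_pos_imp_nonpos, hp, hp.le]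

namespace Polynomial.Chebyshev

theorem T_add_one_sq_sub_mul_U_sq (R : Type*) [CommRing R] (n : ℕ) :
    T R (n + 1) ^ 2 - (X ^ 2 - 1) * U R n ^ 2 = 1 := by
  induction n with
  | zero => simp
  | succ n ih =>
    push_cast
    have h₁ := T_eq_X_mul_T_sub_pol_U R n
    have h₂ := U_eq_X_mul_U_add_T R n
    rw [add_assoc, one_add_one_eq_two]
    linear_combination (T R (n + 2) + X * T R (n + 1) + (X ^ 2 - 1) * U R n) * h₁
      - (X ^ 2 - 1) * (U R (n + 1) + X * U R n + T R (n + 1)) * h₂ + ih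

variable {n : ℕ}

lemma isRoot_U_iff {y : ℝ} : (U ℝ n).IsRoot y ↔ ∃ k < n, node (n + 1) (k + 1) = y := by
  rw [← mem_roots (U_ne_zero ℝ n (by omega)), roots_U_real]
  simp [node]

lemma eval_T_node {k : ℕ} (hk : k ≤ n + 1) :
    (T ℝ (n + 1)).eval (node (n + 1) k) = (-1) ^ k := by
  simpa using eval_T_real_node (n := n + 1) (Finset.mem_Iic.2 hk)

lemma le_node_one_of_isRoot_U {y : ℝ} (hy : (U ℝ n).IsRoot y) : y ≤ node (n + 1) 1 := by
  obtain ⟨k, hk, rfl⟩ := isRoot_U_iff.1 hy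
  exact (strictAntiOn_node (n + 1)).antitoneOn (by simp) (by simp; omega) (by omega)

end Polynomial.Chebyshev

noncomputable def discriminantPoly (n : ℕ) (v : ℝ) : ℝ[X] := 2 * T ℝ (n + 1) - C v * U ℝ n

-- `D² - 4 = U_n · edgeFactor` by the Pell identity; the roots of `edgeFactor` are the band
-- edges away from the zeros of `U_n`.
noncomputable def edgeFactor (n : ℕ) (v : ℝ) : ℝ[X] :=
  (4 * X ^ 2 + C (v ^ 2 - 4)) * U ℝ n - 4 * C v * T ℝ (n + 1)

section Discriminant

variable (n : ℕ) (v : ℝ)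

theorem sparseDiscriminantReal_succ (E : ℝ) :
    sparseDiscriminantReal (n + 1) v E = (discriminantPoly n v).eval (E / 2) := by
  simp [sparseDiscriminantReal, discriminantPoly]

theorem discriminantPoly_sq_sub_four :
    discriminantPoly n v ^ 2 - 4 = U ℝ n * edgeFactor n v := by
  rw [discriminantPoly, edgeFactor, map_sub, map_pow, map_ofNat]
  linear_combination 4 * T_add_one_sq_sub_mul_U_sq ℝ n

theorem eval_neg_discriminantPoly_sq (x : ℝ) :
    (discriminantPoly n v).eval (-x) ^ 2 = (discriminantPoly n (-v)).eval x ^ 2 := by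
  have hT := T_eval_neg ℝ (n + 1) x
  have hU := U_eval_neg ℝ n x
  simp only [discriminantPoly, eval_sub, eval_mul, eval_C, eval_ofNat]
  have hsq : ((((n : ℤ).negOnePow : ℤ) : ℝ)) ^ 2 = 1 := by
    rw [← Int.cast_pow, ← Units.val_pow_eq_pow_val, Int.units_sq, Units.val_one, Int.cast_one]
  rw [hT, hU, Int.negOnePow_succ, Units.val_neg, Int.cast_neg]
  linear_combination (2 * (T ℝ (n + 1)).eval x + v * (U ℝ n).eval x) ^ 2 * hsq

private lemma natDegree_C_mul_U_lt :
    (C v * U ℝ n).natDegree < (2 * T ℝ (n + 1)).natDegree := by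
  rw [← C_ofNat, natDegree_C_mul two_ne_zero, natDegree_T]
  refine natDegree_C_mul_le _ _ |>.trans_lt ?_
  rw [natDegree_U_natCast]
  omega

theorem natDegree_discriminantPoly : (discriminantPoly n v).natDegree = n + 1 := by
  rw [discriminantPoly, natDegree_sub_eq_left_of_natDegree_lt (natDegree_C_mul_U_lt n v),
    ← C_ofNat, natDegree_C_mul two_ne_zero, natDegree_T]
  omega

theorem leadingCoeff_discriminantPoly : (discriminantPoly n v).leadingCoeff = 2 ^ (n + 1) := by
  rw [discriminantPoly, leadingCoeff_sub_of_degree_lt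
    (degree_lt_degree (natDegree_C_mul_U_lt n v)), leadingCoeff_mul, leadingCoeff_T,
    ← C_ofNat, leadingCoeff_C, pow_succ']
  norm_cast

private lemma natDegree_four_lt :
    (4 : ℝ[X]).natDegree < (discriminantPoly n v ^ 2).natDegree := by
  rw [natDegree_ofNat, natDegree_pow, natDegree_discriminantPoly]
  omega

theorem natDegree_discriminantPoly_sq_sub_four :
    (discriminantPoly n v ^ 2 - 4).natDegree = 2 * (n + 1) := by
  rw [natDegree_sub_eq_left_of_natDegree_lt (natDegree_four_lt n v), natDegree_pow,
    natDegree_discriminantPoly]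

theorem leadingCoeff_discriminantPoly_sq_sub_four_pos :
    0 < (discriminantPoly n v ^ 2 - 4).leadingCoeff := by
  rw [leadingCoeff_sub_of_degree_lt (degree_lt_degree (natDegree_four_lt n v)),
    leadingCoeff_pow, leadingCoeff_discriminantPoly]
  positivity

theorem natDegree_edgeFactor : (edgeFactor n v).natDegree = n + 2 := by
  have h := natDegree_discriminantPoly_sq_sub_four n v
  rw [discriminantPoly_sq_sub_four, natDegree_mul (U_ne_zero ℝ n (by omega)) ?_,
    natDegree_U_natCast] at h
  · omega
  · rintro h0
    simp [h0] at h

theorem leadingCoeff_edgeFactor_pos : 0 < (edgeFactor n v).leadingCoeff := by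
  have h := leadingCoeff_discriminantPoly_sq_sub_four_pos n v
  rw [discriminantPoly_sq_sub_four, leadingCoeff_mul, leadingCoeff_U_natCast] at h
  exact pos_of_mul_pos_right h (by positivity)

variable {n}

lemma eval_edgeFactor_node {k : ℕ} (hk : k < n) :
    (edgeFactor n v).eval (node (n + 1) (k + 1)) = -4 * v * (-1) ^ (k + 1) := by
  have hU : (U ℝ n).eval (node (n + 1) (k + 1)) = 0 := isRoot_U_iff.2 ⟨k, hk, rfl⟩
  simp [edgeFactor, hU, eval_T_node (n := n) (k := k + 1) (by omega)]

lemma not_isRoot_edgeFactor_of_isRoot_U (hv : v ≠ 0) {y : ℝ} (hy : (U ℝ n).IsRoot y) :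
    ¬ (edgeFactor n v).IsRoot y := by
  have hpell := congrArg (eval y) (T_add_one_sq_sub_mul_U_sq ℝ n)
  simp only [eval_sub, eval_mul, eval_pow, hy.eq_zero, eval_one] at hpell
  intro hQ
  have hT : (T ℝ (n + 1)).eval y = 0 := by
    have := hQ.eq_zero
    simp only [edgeFactor, eval_sub, eval_mul, hy.eq_zero] at this
    simpa [hv] using this
  simp [hT] at hpell

lemma exists_node_one_lt_eval_edgeFactor_neg (hv : 0 < v) :
    ∃ x₀, node (n + 1) 1 < x₀ ∧ (edgeFactor n v).eval x₀ < 0 := by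
  -- At a zero `x₀ > c` of `D` we have `U(x₀) > 0` and `U(x₀) Q(x₀) = D(x₀)² - 4 = -4`.
  set c := node (n + 1) 1
  have hDc : (discriminantPoly n v).eval c < 0 := by
    have hUc : 0 ≤ (U ℝ n).eval c :=
      eval_nonneg_of_forall_root_le (by simp) fun y hy => le_node_one_of_isRoot_U hy
    simp only [discriminantPoly, eval_sub, eval_mul, eval_ofNat, eval_C]
    rw [eval_T_node (by omega)]
    nlinarith
  obtain ⟨M, hM, hcM⟩ := ((eventually_pos_atTop (p := discriminantPoly n v)
    (by rw [leadingCoeff_discriminantPoly]; positivity)).and (eventually_gt_atTop c)).exists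
  obtain ⟨x₀, hx₀, hDx₀⟩ := intermediate_value_Ioo hcM.le
    (discriminantPoly n v).continuous.continuousOn ⟨hDc, hM⟩
  have hUx₀ : 0 < (U ℝ n).eval x₀ := eval_pos_of_forall_root_lt (by simp) fun y hy =>
    (le_node_one_of_isRoot_U hy).trans_lt hx₀.1
  have hprod := congrArg (eval x₀) (discriminantPoly_sq_sub_four n v)
  simp only [eval_sub, eval_pow, hDx₀, eval_mul, eval_ofNat] at hprod
  exact ⟨x₀, hx₀.1, by nlinarith⟩

theorem exists_finset_roots_edgeFactor (hv : 0 < v) :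
    ∃ S : Finset ℝ, S.card = n + 2 ∧ ∀ x ∈ S, (edgeFactor n v).IsRoot x := by
  obtain ⟨x₀, hcx₀, hQx₀⟩ := exists_node_one_lt_eval_edgeFactor_neg v hv
  obtain ⟨M, hQM, hx₀M⟩ :=
    ((eventually_pos_atTop (leadingCoeff_edgeFactor_pos n v)).and (eventually_gt_atTop x₀)).exists
  obtain ⟨N, hQN, hN⟩ := ((eventually_neg_one_pow_mul_pos_atBot
    (leadingCoeff_edgeFactor_pos n v)).and (eventually_lt_atBot (-1))).exists
  rw [natDegree_edgeFactor] at hQN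
  have hnode_gt : ∀ k, N < node (n + 1) k := fun k => hN.trans_le node_mem_Icc.1
  -- `edgeFactor` alternates in sign along `M > x₀ > node 1 > ⋯ > node n > N`.
  let a : ℕ → ℝ
    | 0 => M
    | 1 => x₀
    | k + 2 => if k < n then node (n + 1) (k + 1) else N
  have hstep : ∀ k < n + 2, a (k + 1) < a k := by
    rintro (_ | _ | k) hk
    · exact hx₀M
    · show (if 0 < n then _ else _) < x₀
      split_ifs
      · exact hcx₀
      · exact (hnode_gt 1).trans hcx₀
    · show (if k + 1 < n then _ else _) < if k < n then _ else _
      rw [if_pos (show k < n by omega)]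
      split_ifs
      · exact node_lt (by omega) (by omega)
      · exact hnode_gt _
  have hsign : ∀ k ≤ n + 2, 0 < (-1) ^ k * (edgeFactor n v).eval (a k) := by
    rintro (_ | _ | k) hk
    · simpa using hQM
    · simpa using hQx₀
    · show 0 < (-1) ^ (k + 2) * (edgeFactor n v).eval (if k < n then _ else _)
      split_ifs with hkn
      · rw [eval_edgeFactor_node v hkn]
        calc (0 : ℝ) < 4 * v * ((-1) ^ (k + 1)) ^ 2 := mul_pos (by linarith) (by positivity)
          _ = _ := by ring
      · rwa [show k = n by omega]
  exact exists_finset_zeros_of_alternating (edgeFactor n v).continuous hstep hsign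

theorem exists_finset_roots_discriminantPoly_sq_sub_four (hv : v ≠ 0) :
    ∃ F : Finset ℝ, F.card = 2 * (n + 1) ∧
      ∀ x ∈ F, (discriminantPoly n v ^ 2 - 4).IsRoot x := by
  wlog hpos : 0 < v generalizing v
  · obtain ⟨F, hF, hroots⟩ :=
      this (-v) (neg_ne_zero.2 hv) (neg_pos.2 ((not_lt.1 hpos).lt_of_ne hv))
    refine ⟨F.image Neg.neg, by rw [Finset.card_image_of_injective _ neg_injective, hF], ?_⟩
    simp only [Finset.mem_image, forall_exists_index, and_imp]
    rintro _ x hx rfl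
    have := (hroots x hx).eq_zero
    simp only [IsRoot, eval_sub, eval_pow, eval_ofNat] at this ⊢
    rwa [eval_neg_discriminantPoly_sq]
  obtain ⟨S, hS, hSroots⟩ := exists_finset_roots_edgeFactor v hpos
  set R := (Finset.range n).image fun k => node (n + 1) (k + 1)
  have hRroots : ∀ x ∈ R, (U ℝ n).IsRoot x := by
    simp only [R, Finset.mem_image, Finset.mem_range]
    exact fun x hx => isRoot_U_iff.2 hx
  have hR : R.card = n := by
    rw [Finset.card_image_of_injOn, Finset.card_range]
    intro k hk l hl hkl
    simpa using (strictAntiOn_node (n + 1)).injOn (by simp at hk ⊢; omega)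
      (by simp at hl ⊢; omega) hkl
  have hdisj : Disjoint R S := Finset.disjoint_left.2 fun x hxR hxS =>
    not_isRoot_edgeFactor_of_isRoot_U v hv (hRroots x hxR) (hSroots x hxS)
  refine ⟨R ∪ S, by rw [Finset.card_union_of_disjoint hdisj, hR, hS]; ring, fun x hx => ?_⟩
  rw [discriminantPoly_sq_sub_four]
  rcases Finset.mem_union.1 hx with hx | hx
  · exact root_mul_right_of_isRoot _ (hRroots x hx)
  · exact root_mul_left_of_isRoot _ (hSroots x hx)

end Discriminant

theorem spectrum_L_bands (L : ℕ) (hL : 1 ≤ L) (v : ℝ) (hv : v ≠ 0) :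
    ∃ γ β : Fin L → ℝ, (∀ i, γ i ≤ β i) ∧ (∀ i j : Fin L, i < j → β i < γ j) ∧
      {E : ℝ | sparseDiscriminantReal L v E ∈ Set.Icc (-2 : ℝ) 2}
        = ⋃ i : Fin L, Set.Icc (γ i) (β i) := by
  obtain ⟨n, rfl⟩ : ∃ n, L = n + 1 := ⟨L - 1, by omega⟩
  obtain ⟨F, hF, hroots⟩ := exists_finset_roots_discriminantPoly_sq_sub_four v hv
  obtain ⟨γ, β, hγβ, hsep, hset⟩ := setOf_eval_nonpos_eq_iUnion_Icc
    (leadingCoeff_discriminantPoly_sq_sub_four_pos n v) hF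
    (natDegree_discriminantPoly_sq_sub_four n v) hroots
  refine ⟨fun i => γ i * 2, fun i => β i * 2, fun i => by simp [hγβ i],
    fun i j hij => by simp [hsep i j hij], ?_⟩
  ext E
  have h := Set.ext_iff.1 hset (E / 2)
  simp only [mem_ofPred_eq, mem_iUnion, mem_Icc, le_div_iff₀ (two_pos : (0 : ℝ) < 2),
    div_le_iff₀ (two_pos : (0 : ℝ) < 2)] at h ⊢
  rw [← h, sparseDiscriminantReal_succ, eval_sub, eval_pow, eval_ofNat, sub_nonpos,
    show (4 : ℝ) = 2 ^ 2 by norm_num, sq_le_sq, abs_two, abs_le]
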